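/- arXiv:1301.7119 — 3 statements merged into one kernel-verified Lean document; each statement's English description precedes it below -/
import Mathlib

section
/- Let M be the modified-label transformation on bit strings. For any two nonempty bit strings x and y with x ≠ y, there exists an index λ with 1 ≤ λ < min(length of M(x), length of M(y)) (0-indexed; i.e., λ is strictly after the first position and within both strings) such that the λ-th bit of M(x) differs from the λ-th bit of M(y). -/
/-!
Position `2i + 1` of `M(x)` carries bit `i` of `x ++ [1]` and position `2i` carries bit `i` of
`x ++ [0]`. If `x` and `y` disagree at some `i < min |x| |y|`, the labels disagree at `2i + 1`.
Otherwise the shorter one, say `x`, is a proper prefix of `y`; then `M(x)` reads `0, 1` at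
positions `2|x|, 2|x| + 1`, where `M(y)` reads `b, b` for `b` the bit of `y` at `|x|`, so one of
these two positions works, and it is at least `2 ≥ 1` because `x` is nonempty.
-/

/-- The modified-label transformation: duplicate each bit and append 0, 1. -/
def modifiedLabel (x : List Bool) : List Bool :=
  x.flatMap (fun b => [b, b]) ++ [false, true]

theorem List.exists_getD_ne_of_not_prefix {α : Type*} {x y : List α}
    (hle : x.length ≤ y.length) (hpre : ¬x <+: y) (d : α) :
    ∃ i < x.length, x.getD i d ≠ y.getD i d := by
  contrapose! hpre
  refine List.prefix_iff_getElem.2 ⟨hle, fun i hi => ?_⟩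
  rw [← List.getD_eq_getElem _ d hi, ← List.getD_eq_getElem _ d (hi.trans_le hle)]
  exact hpre i hi

@[simp]
theorem modifiedLabel_nil : modifiedLabel [] = [false, true] := rfl

@[simp]
theorem modifiedLabel_cons (b : Bool) (x : List Bool) :
    modifiedLabel (b :: x) = b :: b :: modifiedLabel x := rfl

@[simp]
theorem length_modifiedLabel (x : List Bool) : (modifiedLabel x).length = 2 * x.length + 2 := by
  induction x with
  | nil => rfl
  | cons b x ih => simp [ih]; ring

theorem getD_modifiedLabel_two_mul (x : List Bool) (i : ℕ) (d : Bool) :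
    (modifiedLabel x).getD (2 * i) d = (x ++ [false]).getD i d := by
  induction x generalizing i with
  | nil => rcases i with _ | _ | i <;> simp [Nat.mul_succ]
  | cons b x ih =>
    rcases i with _ | i
    · rfl
    · simp only [Nat.mul_succ, modifiedLabel_cons, List.cons_append, List.getD_cons_succ, ih]

theorem getD_modifiedLabel_two_mul_add_one (x : List Bool) (i : ℕ) (d : Bool) :
    (modifiedLabel x).getD (2 * i + 1) d = (x ++ [true]).getD i d := by
  induction x generalizing i with
  | nil => rcases i with _ | _ | i <;> simp [Nat.mul_succ]
  | cons b x ih =>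
    rcases i with _ | i
    · rfl
    · simp only [Nat.mul_succ, modifiedLabel_cons, List.cons_append, List.getD_cons_succ, ih]

theorem exists_getD_modifiedLabel_ne_of_length_lt {x y : List Bool} (hlt : x.length < y.length)
    (d : Bool) :
    ∃ l, 2 * x.length ≤ l ∧ l ≤ 2 * x.length + 1 ∧
      (modifiedLabel x).getD l d ≠ (modifiedLabel y).getD l d := by
  have hy (c : Bool) : (y ++ [c]).getD x.length d = y.getD x.length d :=
    List.getD_append _ _ _ _ hlt
  cases hb : y.getD x.length d
  · refine ⟨2 * x.length + 1, by omega, le_rfl, ?_⟩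
    rw [getD_modifiedLabel_two_mul_add_one, getD_modifiedLabel_two_mul_add_one, hy, hb,
      List.getD_append_right _ _ _ _ le_rfl]
    simp
  · refine ⟨2 * x.length, le_rfl, by omega, ?_⟩
    rw [getD_modifiedLabel_two_mul, getD_modifiedLabel_two_mul, hy, hb,
      List.getD_append_right _ _ _ _ le_rfl]
    simp

/-- For distinct nonempty bit strings `x` and `y`, the modified labels `M(x)` and `M(y)`
differ at some position `l` with `1 ≤ l < min |M(x)| |M(y)|` (0-indexed). -/
theorem modifiedLabel_differ_at_inner_index (x y : List Bool)
    (hx : x ≠ []) (hy : y ≠ []) (hxy : x ≠ y) :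
    ∃ l : ℕ, 1 ≤ l ∧ l < min (modifiedLabel x).length (modifiedLabel y).length ∧
      (modifiedLabel x).getD l false ≠ (modifiedLabel y).getD l false := by
  wlog hle : x.length ≤ y.length generalizing x y
  · obtain ⟨l, hl, hlt, hne⟩ := this y x hy hx hxy.symm (by omega)
    exact ⟨l, hl, min_comm (α := ℕ) _ _ ▸ hlt, hne.symm⟩
  simp only [length_modifiedLabel]
  by_cases hpre : x <+: y
  · have hlt : x.length < y.length :=
      hle.lt_of_ne fun h => hxy (hpre.eq_of_length h)
    have hpos : 0 < x.length := List.length_pos_iff.2 hx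
    obtain ⟨l, hl₁, hl₂, hne⟩ := exists_getD_modifiedLabel_ne_of_length_lt hlt false
    exact ⟨l, by omega, by omega, hne⟩
  · obtain ⟨i, hi, hne⟩ := List.exists_getD_ne_of_not_prefix hle hpre false
    refine ⟨2 * i + 1, by omega, by omega, ?_⟩
    rwa [getD_modifiedLabel_two_mul_add_one, getD_modifiedLabel_two_mul_add_one,
      List.getD_append _ _ _ _ hi, List.getD_append _ _ _ _ (by omega)]
end

section
/- Suppose P : ℕ → ℕ is nondecreasing and P(k) ≥ 1 for all k ≥ 1. Then for every positive integer k, (k−1)·K*(k) + k·(2·A*(4k) + 2·B*(2k)) < (2k−1)·K*(k). (This is the counting inequality asserting that the number of nodes in the k-th piece of the trajectory constructed by Algorithm RV-asynch-poly, which is at most (k−1)·K*(k) + k·(2·A*(4k)+2·B*(2k)), is strictly less than (2k−1)·K*(k), the number of copies of the integral trajectory contained in the k-th fence Ω(k).) -/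
/-- `X*(k) = 2·P(k) + 1`: bound on the number of nodes of `X(k,v)`. -/
def Xstar (P : ℕ → ℕ) (k : ℕ) : ℕ := 2 * P k + 1

/-- `Q*(k) = Σ_{i=1}^k X*(i)`: bound on the number of nodes of `Q(k,v)`. -/
def Qstar (P : ℕ → ℕ) (k : ℕ) : ℕ := ∑ i ∈ Finset.Icc 1 k, Xstar P i

/-- `Y*(k) = 2·P(k)·Q*(k)`: bound on the number of nodes of `Y(k,v)`. -/
def Ystar (P : ℕ → ℕ) (k : ℕ) : ℕ := 2 * P k * Qstar P k

/-- `Z*(k) = Σ_{i=1}^k Y*(i)`: bound on the number of nodes of `Z(k,v)`. -/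
def Zstar (P : ℕ → ℕ) (k : ℕ) : ℕ := ∑ i ∈ Finset.Icc 1 k, Ystar P i

/-- `A*(k) = 2·P(k)·Z*(k)`: bound on the number of nodes of `A(k,v)`. -/
def Astar (P : ℕ → ℕ) (k : ℕ) : ℕ := 2 * P k * Zstar P k

/-- `B*(k) = 2·A*(8k)·Y*(k)`: bound on the number of nodes of `B(k,v)`. -/
def Bstar (P : ℕ → ℕ) (k : ℕ) : ℕ := 2 * Astar P (8 * k) * Ystar P k

/-- `K*(k) = 2·B*(8k)·X*(k)`: bound on the number of nodes of `K(k,v)`. -/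
def Kstar (P : ℕ → ℕ) (k : ℕ) : ℕ := 2 * Bstar P (8 * k) * Xstar P k

/-- `Ω*(k) = (2k−1)·K*(k)·X*(k)`: bound on the number of nodes of `Ω(k,v)`. -/
def Omegastar (P : ℕ → ℕ) (k : ℕ) : ℕ := (2 * k - 1) * Kstar P k * Xstar P k

/-!
Since `P` is monotone, so are `Y*`, `A*` and `B*`, and `B*(8k) = 2·A*(64k)·Y*(8k)` dominates both
`2·A*(4k)` and `B*(2k)`. Hence `2·A*(4k) + 2·B*(2k) ≤ 3·B*(8k) < 2·B*(8k)·X*(k) = K*(k)`, because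
`X*(k) ≥ 3` and `B*(8k) > 0`. Splitting `2k − 1 = (k − 1) + k` then gives the theorem.
-/

section Monotonicity

variable {P : ℕ → ℕ}

theorem Qstar_mono (P : ℕ → ℕ) : Monotone (Qstar P) := fun _ _ h =>
  Finset.sum_le_sum_of_subset (Finset.Icc_subset_Icc_right h)

theorem Zstar_mono (P : ℕ → ℕ) : Monotone (Zstar P) := fun _ _ h =>
  Finset.sum_le_sum_of_subset (Finset.Icc_subset_Icc_right h)

theorem Ystar_mono (hP : Monotone P) : Monotone (Ystar P) := fun _ _ h =>
  Nat.mul_le_mul (Nat.mul_le_mul_left 2 (hP h)) (Qstar_mono P h)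

theorem Astar_mono (hP : Monotone P) : Monotone (Astar P) := fun _ _ h =>
  Nat.mul_le_mul (Nat.mul_le_mul_left 2 (hP h)) (Zstar_mono P h)

theorem Bstar_mono (hP : Monotone P) : Monotone (Bstar P) := fun _ _ h =>
  Nat.mul_le_mul (Nat.mul_le_mul_left 2 (Astar_mono hP (Nat.mul_le_mul_left 8 h)))
    (Ystar_mono hP h)

end Monotonicity

section Positivity

variable {P : ℕ → ℕ} {k : ℕ}

theorem Xstar_le_Qstar (hk : 0 < k) : Xstar P k ≤ Qstar P k :=
  Finset.single_le_sum (f := Xstar P) (fun _ _ => Nat.zero_le _) (Finset.mem_Icc.2 ⟨hk, le_rfl⟩)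

theorem Ystar_le_Zstar (hk : 0 < k) : Ystar P k ≤ Zstar P k :=
  Finset.single_le_sum (f := Ystar P) (fun _ _ => Nat.zero_le _) (Finset.mem_Icc.2 ⟨hk, le_rfl⟩)

theorem Ystar_pos (hk : 0 < k) (hPk : 0 < P k) : 0 < Ystar P k := by
  have hQ : 0 < Qstar P k := lt_of_lt_of_le (Nat.succ_pos _) (Xstar_le_Qstar hk)
  unfold Ystar
  positivity

theorem Astar_pos (hk : 0 < k) (hPk : 0 < P k) : 0 < Astar P k := by
  have hZ : 0 < Zstar P k := lt_of_lt_of_le (Ystar_pos hk hPk) (Ystar_le_Zstar hk)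
  unfold Astar
  positivity

theorem Bstar_pos (hP1 : ∀ k, 0 < k → 0 < P k) (hk : 0 < k) : 0 < Bstar P k := by
  have hA : 0 < Astar P (8 * k) := Astar_pos (by omega) (hP1 _ (by omega))
  have hY : 0 < Ystar P k := Ystar_pos hk (hP1 k hk)
  unfold Bstar
  positivity

end Positivity

theorem two_mul_Astar_le_Bstar {P : ℕ → ℕ} (hP : Monotone P) {j k : ℕ} (hjk : j ≤ 8 * k)
    (hY : 0 < Ystar P k) : 2 * Astar P j ≤ Bstar P k :=
  calc 2 * Astar P j ≤ 2 * Astar P (8 * k) := Nat.mul_le_mul_left 2 (Astar_mono hP hjk)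
    _ ≤ 2 * Astar P (8 * k) * Ystar P k := Nat.le_mul_of_pos_right _ hY

theorem two_mul_Astar_add_two_mul_Bstar_lt_Kstar {P : ℕ → ℕ} (hP : Monotone P)
    (hP1 : ∀ k, 0 < k → 0 < P k) {k : ℕ} (hk : 0 < k) :
    2 * Astar P (4 * k) + 2 * Bstar P (2 * k) < Kstar P k := by
  have hA : 2 * Astar P (4 * k) ≤ Bstar P (8 * k) :=
    two_mul_Astar_le_Bstar hP (by omega) (Ystar_pos (by omega) (hP1 _ (by omega)))
  have hB : Bstar P (2 * k) ≤ Bstar P (8 * k) := Bstar_mono hP (by omega)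
  have hB_pos : 0 < Bstar P (8 * k) := Bstar_pos hP1 (by omega)
  have hX : 3 ≤ Xstar P k := by have := hP1 k hk; unfold Xstar; omega
  calc 2 * Astar P (4 * k) + 2 * Bstar P (2 * k) ≤ 3 * Bstar P (8 * k) := by omega
    _ < 2 * Bstar P (8 * k) * 3 := by omega
    _ ≤ Kstar P k := Nat.mul_le_mul_left _ hX

/-- For nondecreasing `P` with `P(k) ≥ 1` for `k ≥ 1`, the number of nodes of the
`k`-th piece, at most `(k−1)·K*(k) + k·(2·A*(4k)+2·B*(2k))`, is strictly less than
`(2k−1)·K*(k)`, the number of copies of the integral trajectory in the `k`-th fence. -/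
theorem piece_lt_fence (P : ℕ → ℕ)
    (hP : ∀ k k' : ℕ, k ≤ k' → P k ≤ P k')
    (hP1 : ∀ k : ℕ, 1 ≤ k → 1 ≤ P k) :
    ∀ k : ℕ, 1 ≤ k →
      (k - 1) * Kstar P k + k * (2 * Astar P (4 * k) + 2 * Bstar P (2 * k))
        < (2 * k - 1) * Kstar P k := by
  intro k hk
  have hpiece : k * (2 * Astar P (4 * k) + 2 * Bstar P (2 * k)) < k * Kstar P k :=
    Nat.mul_lt_mul_of_pos_left
      (two_mul_Astar_add_two_mul_Bstar_lt_Kstar (fun a b h => hP a b h) hP1 hk) hk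
  rw [show 2 * k - 1 = (k - 1) + k by omega, add_mul]
  omega
end

section
/- Suppose P : ℕ → ℕ is polynomially bounded, i.e., there exists a polynomial p with natural-number coefficients such that P(k) ≤ p(k) for all k. Define N(n,m) = 2·(n + 2m + 2) + 1, T*(n,m,k) = N(n,m)·(2·A*(4k) + 2·B*(2k) + K*(k)), and Π(n,m) = Σ_{k=1}^{N(n,m)} (T*(n,m,k) + Ω*(k)). Then Π is polynomially bounded in n and m: there exists a polynomial q with natural-number coefficients such that Π(n,m) ≤ q(n + m) for all natural numbers n, m. -/
/-- `N(n,m) = 2·(n + 2m + 2) + 1`, where `l = 2m+2` is the length of the shorter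
modified label. -/
def Nbound (n m : ℕ) : ℕ := 2 * (n + 2 * m + 2) + 1

/-- `T*(n,m,k) = N(n,m)·(2·A*(4k) + 2·B*(2k) + K*(k))`: bound on the number of nodes
in a piece in iteration `k`. -/
def Tstar (P : ℕ → ℕ) (n m k : ℕ) : ℕ :=
  Nbound n m * (2 * Astar P (4 * k) + 2 * Bstar P (2 * k) + Kstar P k)

/-- `Π(n,m) = Σ_{k=1}^{N(n,m)} (T*(n,m,k) + Ω*(k))`: bound on the number of edge
traversals of an agent before rendezvous is guaranteed. -/
def Pibound (P : ℕ → ℕ) (n m : ℕ) : ℕ :=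
  ∑ k ∈ Finset.Icc 1 (Nbound n m), (Tstar P n m k + Omegastar P k)

/-!
Polynomially bounded functions `ℕ → ℕ` are closed under sums, products, the substitution
`k ↦ c * k` and partial sums `k ↦ ∑_{i=1}^k f i` (since bounds by polynomials with natural
coefficients are monotone). Each of `X*, Q*, …, Ω*` is built from `P` by these operations, and
`Π(n, m)` is a polynomially bounded function of `N(n, m) ≤ 4 (n + m) + 5`.
-/

open Polynomial Finset

theorem Polynomial.monotone_eval_nat (p : ℕ[X]) : Monotone fun x : ℕ => p.eval x := by
  intro a b h
  simp only [eval_eq_sum_range]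
  exact sum_le_sum fun i _ => Nat.mul_le_mul_left _ (Nat.pow_le_pow_left h i)

def PolyBounded (f : ℕ → ℕ) : Prop := ∃ p : ℕ[X], ∀ k, f k ≤ p.eval k

namespace PolyBounded

variable {f g : ℕ → ℕ}

theorem const (c : ℕ) : PolyBounded fun _ => c := ⟨C c, by simp⟩

theorem id : PolyBounded fun k => k := ⟨X, by simp⟩

theorem of_le (hg : PolyBounded g) (h : ∀ k, f k ≤ g k) : PolyBounded f := by
  obtain ⟨p, hp⟩ := hg
  exact ⟨p, fun k => (h k).trans (hp k)⟩

theorem add (hf : PolyBounded f) (hg : PolyBounded g) : PolyBounded fun k => f k + g k := by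
  obtain ⟨p, hp⟩ := hf
  obtain ⟨q, hq⟩ := hg
  exact ⟨p + q, fun k => by simpa using Nat.add_le_add (hp k) (hq k)⟩

theorem mul (hf : PolyBounded f) (hg : PolyBounded g) : PolyBounded fun k => f k * g k := by
  obtain ⟨p, hp⟩ := hf
  obtain ⟨q, hq⟩ := hg
  exact ⟨p * q, fun k => by simpa using Nat.mul_le_mul (hp k) (hq k)⟩

theorem const_mul (c : ℕ) (hf : PolyBounded f) : PolyBounded fun k => c * f k :=
  (const c).mul hf

theorem comp_mul (c : ℕ) (hf : PolyBounded f) : PolyBounded fun k => f (c * k) := by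
  obtain ⟨p, hp⟩ := hf
  exact ⟨p.comp (C c * X), fun k => by simpa [eval_comp] using hp (c * k)⟩

theorem sum_Icc (hf : PolyBounded f) : PolyBounded fun k => ∑ i ∈ Icc 1 k, f i := by
  obtain ⟨p, hp⟩ := hf
  refine ⟨X * p, fun k => ?_⟩
  rw [eval_mul, eval_X]
  calc ∑ i ∈ Icc 1 k, f i ≤ #(Icc 1 k) • p.eval k :=
        sum_le_card_nsmul _ _ _ fun i hi =>
          (hp i).trans (p.monotone_eval_nat (mem_Icc.mp hi).2)
    _ = k * p.eval k := by simp

end PolyBounded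

section

variable {P : ℕ → ℕ} (hP : PolyBounded P)
include hP

theorem polyBounded_Xstar : PolyBounded (Xstar P) :=
  (hP.const_mul 2).add (.const 1)

theorem polyBounded_Ystar : PolyBounded (Ystar P) :=
  (hP.const_mul 2).mul (polyBounded_Xstar hP).sum_Icc

theorem polyBounded_Astar : PolyBounded (Astar P) :=
  (hP.const_mul 2).mul (polyBounded_Ystar hP).sum_Icc

theorem polyBounded_Bstar : PolyBounded (Bstar P) :=
  (((polyBounded_Astar hP).comp_mul 8).const_mul 2).mul (polyBounded_Ystar hP)

theorem polyBounded_Kstar : PolyBounded (Kstar P) :=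
  (((polyBounded_Bstar hP).comp_mul 8).const_mul 2).mul (polyBounded_Xstar hP)

theorem polyBounded_Omegastar : PolyBounded (Omegastar P) :=
  ((PolyBounded.id.const_mul 2).mul (polyBounded_Kstar hP)).mul (polyBounded_Xstar hP)
    |>.of_le fun _ => Nat.mul_le_mul_right _ (Nat.mul_le_mul_right _ (Nat.sub_le _ 1))

theorem polyBounded_piece :
    PolyBounded fun k => 2 * Astar P (4 * k) + 2 * Bstar P (2 * k) + Kstar P k :=
  ((((polyBounded_Astar hP).comp_mul 4).const_mul 2).add
    (((polyBounded_Bstar hP).comp_mul 2).const_mul 2)).add (polyBounded_Kstar hP)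

end

theorem Pibound_eq (P : ℕ → ℕ) (n m : ℕ) :
    Pibound P n m = Nbound n m * ∑ k ∈ Icc 1 (Nbound n m),
        (2 * Astar P (4 * k) + 2 * Bstar P (2 * k) + Kstar P k) +
      ∑ k ∈ Icc 1 (Nbound n m), Omegastar P k := by
  rw [Pibound, sum_add_distrib, mul_sum]
  rfl

theorem Nbound_le_eval (n m : ℕ) : Nbound n m ≤ (C 4 * X + C 5 : ℕ[X]).eval (n + m) := by
  simp only [Nbound, eval_add, eval_mul, eval_C, eval_X]
  omega

/-- If `P` is polynomially bounded, then `Π` is polynomially bounded in `n + m`. -/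
theorem Pibound_polynomially_bounded (P : ℕ → ℕ)
    (hP : ∃ p : Polynomial ℕ, ∀ k : ℕ, P k ≤ p.eval k) :
    ∃ q : Polynomial ℕ, ∀ n m : ℕ, Pibound P n m ≤ q.eval (n + m) := by
  obtain ⟨p, hp⟩ : PolyBounded fun N =>
      N * ∑ k ∈ Icc 1 N, (2 * Astar P (4 * k) + 2 * Bstar P (2 * k) + Kstar P k) +
        ∑ k ∈ Icc 1 N, Omegastar P k :=
    (PolyBounded.id.mul (polyBounded_piece hP).sum_Icc).add (polyBounded_Omegastar hP).sum_Icc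
  refine ⟨p.comp (C 4 * X + C 5), fun n m => ?_⟩
  calc Pibound P n m ≤ p.eval (Nbound n m) := (Pibound_eq P n m).trans_le (hp _)
    _ ≤ (p.comp (C 4 * X + C 5)).eval (n + m) := by
      rw [eval_comp]
      exact p.monotone_eval_nat (Nbound_le_eval n m)
end
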